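/- arXiv:2602.17885 — 4 statements merged into one kernel-verified Lean document; each statement's English description precedes it below -/
import Mathlib

section
/- Method of bi-characteristics for the Hamilton–Jacobi equation with background flow: let w : ℝ × ℝ^d → ℝ^d be continuously differentiable and let φ : ℝ × ℝ^d → ℝ be twice continuously differentiable and satisfy ∂_t φ(t,x) + (1/2)‖∇_x φ(t,x)‖² + ⟨∇_x φ(t,x), w(t,x)⟩ = 0 for all (t,x). Suppose X : [0,1] → ℝ^d is differentiable and satisfies Ẋ(t) = ∇_x φ(t, X(t)) + w(t, X(t)). Then the function q(t) := ∇_x φ(t, X(t)) is differentiable and satisfies the adjoint equation q̇(t) = −(D_x w(t, X(t)))^T q(t) for all t ∈ [0,1], where D_x w denotes the spatial Jacobian matrix of w. -/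
open scoped RealInnerProductSpace

/-!
Differentiating the Hamilton–Jacobi equation in `x` and using the symmetry of
the second derivative of `φ` on `ℝ × ℝ^d` gives
`∂ₜ∇ₓφ + D²ₓφ (∇ₓφ + w) = -(Dₓw)ᵀ ∇ₓφ`.
Along a bicharacteristic, the chain rule gives `q̇ = ∂ₜ∇ₓφ + D²ₓφ Ẋ` with `Ẋ = ∇ₓφ + w`,
which is the left-hand side.
-/

open ContinuousLinearMap

theorem HasFDerivAt.hasDerivAt_of_uncurry {E : Type*} [NormedAddCommGroup E] [NormedSpace ℝ E]
    {φ : ℝ → E → ℝ} {T : ℝ × E →L[ℝ] ℝ} {t : ℝ} {x : E}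
    (h : HasFDerivAt (Function.uncurry φ) T (t, x)) :
    HasDerivAt (fun s => φ s x) (T (1, 0)) t :=
  HasFDerivAt.comp_hasDerivAt (l := Function.uncurry φ) t h
    ((hasDerivAt_id' t).prodMk (hasDerivAt_const t x))

section SpatialGradient

variable {E : Type*} [NormedAddCommGroup E] [InnerProductSpace ℝ E] [CompleteSpace E]

variable (E) in
noncomputable def spatialGradient : (ℝ × E →L[ℝ] ℝ) →L[ℝ] E :=
  (InnerProductSpace.toDual ℝ E).symm.toContinuousLinearEquiv.toContinuousLinearMap ∘L
    precomp ℝ (inr ℝ ℝ E)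

@[simp]
theorem inner_spatialGradient (T : ℝ × E →L[ℝ] ℝ) (v : E) :
    ⟪spatialGradient E T, v⟫ = T (0, v) := by
  simp [spatialGradient, InnerProductSpace.toDual_symm_apply]

@[simp]
theorem inner_spatialGradient_right (T : ℝ × E →L[ℝ] ℝ) (v : E) :
    ⟪v, spatialGradient E T⟫ = T (0, v) := by
  rw [real_inner_comm, inner_spatialGradient]

theorem HasFDerivAt.hasGradientAt_of_uncurry {φ : ℝ → E → ℝ} {T : ℝ × E →L[ℝ] ℝ}
    {t : ℝ} {x : E} (h : HasFDerivAt (Function.uncurry φ) T (t, x)) :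
    HasGradientAt (φ t) (spatialGradient E T) x := by
  have h' := h.comp x (hasFDerivAt_prodMk_right t x)
  rw [hasFDerivAt_iff_hasGradientAt] at h'
  exact h'

theorem ContDiff.hasDerivAt_spatialGradient_comp {Φ : ℝ × E → ℝ} (hΦ : ContDiff ℝ 2 Φ)
    {X : ℝ → E} {V : E} {t : ℝ} (hX : HasDerivAt X V t) :
    HasDerivAt (fun s => spatialGradient E (fderiv ℝ Φ (s, X s)))
      (spatialGradient E (fderiv ℝ (fderiv ℝ Φ) (t, X t) (1, V))) t := by
  have hΦ' := ((hΦ.fderiv_right le_rfl).differentiable one_ne_zero (t, X t)).hasFDerivAt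
  exact ((spatialGradient E).hasFDerivAt.comp _ hΦ').comp_hasDerivAt t
    ((hasDerivAt_id' t).prodMk hX)

theorem ContDiff.hasFDerivAt_hamiltonJacobi {Φ : ℝ × E → ℝ} (hΦ : ContDiff ℝ 2 Φ)
    {W : E → E} {DW : E →L[ℝ] E} {s : ℝ} {x : E} (hW : HasFDerivAt W DW x) :
    HasFDerivAt (fun y => fderiv ℝ Φ (s, y) (1, 0)
        + (1 / 2) * ‖spatialGradient E (fderiv ℝ Φ (s, y))‖ ^ 2
        + ⟪spatialGradient E (fderiv ℝ Φ (s, y)), W y⟫)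
      (apply ℝ ℝ (1, spatialGradient E (fderiv ℝ Φ (s, x)) + W x) ∘L
          fderiv ℝ (fderiv ℝ Φ) (s, x) ∘L inr ℝ ℝ E
        + innerSL ℝ (spatialGradient E (fderiv ℝ Φ (s, x))) ∘L DW) x := by
  have hΦ' := ((hΦ.fderiv_right le_rfl).differentiable one_ne_zero (s, x)).hasFDerivAt
  have hΦ's := hΦ'.comp x (hasFDerivAt_prodMk_right s x)
  have hG := (spatialGradient E).hasFDerivAt.comp x hΦ's
  have ht := (apply ℝ ℝ ((1 : ℝ), (0 : E))).hasFDerivAt.comp x hΦ's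
  refine ((ht.add (hG.norm_sq.const_mul (1 / 2))).add (hG.inner ℝ hW)).congr_fderiv ?_
  have hsplit (T : ℝ × E →L[ℝ] ℝ) (a b : E) :
      T (1, a + b) = T (1, 0) + T (0, a) + T (0, b) := by
    rw [← map_add, ← map_add]; simp
  ext v
  simp only [Function.comp_apply, add_apply, comp_apply, inr_apply, apply_apply, smul_apply,
    coe_innerSL_apply, ContinuousLinearMap.prod_apply, fderivInnerCLM_apply, nsmul_eq_mul,
    smul_eq_mul, inner_spatialGradient, inner_spatialGradient_right, hsplit]
  ring

theorem ContDiff.spatialGradient_fderiv_fderiv_eq_neg_adjoint {Φ : ℝ × E → ℝ}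
    (hΦ : ContDiff ℝ 2 Φ) {W : E → E} {DW : E →L[ℝ] E} {s : ℝ} {x : E}
    (hW : HasFDerivAt W DW x)
    (hHJ : ∀ y, fderiv ℝ Φ (s, y) (1, 0)
        + (1 / 2) * ‖spatialGradient E (fderiv ℝ Φ (s, y))‖ ^ 2
        + ⟪spatialGradient E (fderiv ℝ Φ (s, y)), W y⟫ = 0) :
    spatialGradient E
        (fderiv ℝ (fderiv ℝ Φ) (s, x) (1, spatialGradient E (fderiv ℝ Φ (s, x)) + W x))
      = -(adjoint DW) (spatialGradient E (fderiv ℝ Φ (s, x))) := by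
  have hD := (hΦ.hasFDerivAt_hamiltonJacobi hW).unique
    ((funext hHJ).symm ▸ hasFDerivAt_const (0 : ℝ) x)
  have hsymm := hΦ.contDiffAt.isSymmSndFDerivAt (x := (s, x)) (by simp)
  refine ext_inner_right ℝ fun v => ?_
  have hv := congr($hD v)
  simp only [add_apply, comp_apply, inr_apply, apply_apply, coe_innerSL_apply, zero_apply] at hv
  rw [inner_spatialGradient, hsymm.eq, inner_neg_left, adjoint_inner_left]
  linarith

end SpatialGradient

theorem bicharacteristics_adjoint_equation_general (d : ℕ)
    (w : ℝ → EuclideanSpace ℝ (Fin d) → EuclideanSpace ℝ (Fin d))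
    (Dw : ℝ → EuclideanSpace ℝ (Fin d) →
      (EuclideanSpace ℝ (Fin d) →L[ℝ] EuclideanSpace ℝ (Fin d)))
    (hDw : ∀ t x, HasFDerivAt (w t) (Dw t x) x)
    (φ : ℝ → EuclideanSpace ℝ (Fin d) → ℝ)
    (hφ : ContDiff ℝ 2 (Function.uncurry φ))
    (hHJ : ∀ t x, deriv (fun s => φ s x) t
      + (1 / 2) * ‖gradient (φ t) x‖ ^ 2 + ⟪gradient (φ t) x, w t x⟫ = 0)
    (X : ℝ → EuclideanSpace ℝ (Fin d))
    (hX : ∀ t ∈ Set.Icc (0 : ℝ) 1,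
      HasDerivAt X (gradient (φ t) (X t) + w t (X t)) t) :
    ∀ t ∈ Set.Icc (0 : ℝ) 1,
      HasDerivAt (fun s => gradient (φ s) (X s))
        (-(ContinuousLinearMap.adjoint (Dw t (X t))) (gradient (φ t) (X t))) t := by
  intro t ht
  have hφ' (s y) :
      HasFDerivAt (Function.uncurry φ) (fderiv ℝ (Function.uncurry φ) (s, y)) (s, y) :=
    (hφ.differentiable two_ne_zero (s, y)).hasFDerivAt
  have hgrad (s y) :
      gradient (φ s) y = spatialGradient _ (fderiv ℝ (Function.uncurry φ) (s, y)) :=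
    (hφ' s y).hasGradientAt_of_uncurry.gradient
  have hHJ' (y) : fderiv ℝ (Function.uncurry φ) (t, y) (1, 0)
      + (1 / 2) * ‖spatialGradient _ (fderiv ℝ (Function.uncurry φ) (t, y))‖ ^ 2
      + ⟪spatialGradient _ (fderiv ℝ (Function.uncurry φ) (t, y)), w t y⟫ = 0 := by
    rw [← hgrad, ← (hφ' t y).hasDerivAt_of_uncurry.deriv]
    exact hHJ t y
  simp only [hgrad] at hX ⊢
  exact (hφ.hasDerivAt_spatialGradient_comp (hX t ht)).congr_deriv
    (hφ.spatialGradient_fderiv_fderiv_eq_neg_adjoint (hDw t (X t)) hHJ')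

/-- **Method of bi-characteristics for the Hamilton–Jacobi equation with background flow.**
If `φ` is a C² solution of `∂ₜφ + (1/2)‖∇ₓφ‖² + ⟨∇ₓφ, w⟩ = 0` with `w` a C¹ vector field
(with spatial Fréchet derivative `Dw`), and `X` solves `Ẋ(t) = ∇ₓφ(t, X(t)) + w(t, X(t))` on
`[0,1]`, then `q(t) := ∇ₓφ(t, X(t))` satisfies the adjoint equation
`q̇(t) = −(Dₓw(t, X(t)))ᵀ q(t)`. -/
theorem bicharacteristics_adjoint_equation (d : ℕ)
    (w : ℝ → EuclideanSpace ℝ (Fin d) → EuclideanSpace ℝ (Fin d))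
    (Dw : ℝ → EuclideanSpace ℝ (Fin d) →
      (EuclideanSpace ℝ (Fin d) →L[ℝ] EuclideanSpace ℝ (Fin d)))
    (hw : ContDiff ℝ 1 (Function.uncurry w))
    (hDw : ∀ t x, HasFDerivAt (w t) (Dw t x) x)
    (φ : ℝ → EuclideanSpace ℝ (Fin d) → ℝ)
    (hφ : ContDiff ℝ 2 (Function.uncurry φ))
    (hHJ : ∀ t x, deriv (fun s => φ s x) t
      + (1 / 2) * ‖gradient (φ t) x‖ ^ 2 + ⟪gradient (φ t) x, w t x⟫ = 0)
    (X : ℝ → EuclideanSpace ℝ (Fin d))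
    (hX : ∀ t ∈ Set.Icc (0 : ℝ) 1,
      HasDerivAt X (gradient (φ t) (X t) + w t (X t)) t) :
    ∀ t ∈ Set.Icc (0 : ℝ) 1,
      HasDerivAt (fun s => gradient (φ s) (X s))
        (-(ContinuousLinearMap.adjoint (Dw t (X t))) (gradient (φ t) (X t))) t :=
  bicharacteristics_adjoint_equation_general d w Dw hDw φ hφ hHJ X hX
end

section
/- First variation of the control action: let w : ℝ × ℝ^d → ℝ^d be continuously differentiable with bounded derivative, let X : [0,1] → ℝ^d be continuously differentiable, and set q(t) := Ẋ(t) − w(t, X(t)); assume q is continuously differentiable. Then for every continuously differentiable variation η : [0,1] → ℝ^d with η(0) = η(1) = 0, the derivative at ε = 0 of the map ε ↦ ∫₀¹ (1/2)‖Ẋ(t) + ε η̇(t) − w(t, X(t) + ε η(t))‖² dt exists and equals −∫₀¹ ⟨q̇(t) + (D_x w(t, X(t)))^T q(t), η(t)⟩ dt. In particular, if q̇(t) = −(D_x w(t, X(t)))^T q(t) for all t, then the first variation of the action vanishes for every such η. -/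
/-!
Differentiating under the integral sign, which is legitimate because the `ε`-derivative of the
integrand is jointly continuous and hence bounded on compact sets, the first variation is
`∫ ⟪q, η̇ - Dₓw(t, X) η⟫`. Integrating `⟪q, η̇⟫` by parts, the boundary term vanishes with `η`,
and moving `Dₓw(t, X)` across the inner product turns it into its adjoint.
-/

open scoped RealInnerProductSpace
open intervalIntegral Function

theorem ContDiff.continuous_uncurry_of_hasFDerivAt_right {𝕜 E F G : Type*}
    [NontriviallyNormedField 𝕜] [NormedAddCommGroup E] [NormedSpace 𝕜 E] [NormedAddCommGroup F]
    [NormedSpace 𝕜 F] [NormedAddCommGroup G] [NormedSpace 𝕜 G] {w : E → F → G}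
    {Dw : E → F → F →L[𝕜] G} (hw : ContDiff 𝕜 1 (uncurry w))
    (hDw : ∀ t x, HasFDerivAt (w t) (Dw t x) x) :
    Continuous (uncurry Dw) := by
  have hDw_eq : ∀ p : E × F, Dw p.1 p.2 = (fderiv 𝕜 (uncurry w) p).comp (.inr 𝕜 E F) :=
    fun ⟨t, x⟩ => (hDw t x).unique <|
      (hw.differentiable one_ne_zero (t, x)).hasFDerivAt.comp x (hasFDerivAt_prodMk_right t x)
  exact ((hw.continuous_fderiv one_ne_zero).clm_comp continuous_const).congr fun p =>
    (hDw_eq p).symm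

theorem hasDerivAt_intervalIntegral_of_continuous_deriv {E : Type*} [NormedAddCommGroup E]
    [NormedSpace ℝ E] {F F' : ℝ → ℝ → E} {a b : ℝ} (ε₀ : ℝ) (hF : ∀ ε, Continuous (F ε))
    (hF' : Continuous (uncurry F')) (hderiv : ∀ ε t, HasDerivAt (F · t) (F' ε t) ε) :
    HasDerivAt (fun ε => ∫ t in a..b, F ε t) (∫ t in a..b, F' ε₀ t) ε₀ := by
  obtain ⟨C, hC⟩ := (isCompact_closedBall ε₀ 1 |>.prod isCompact_uIcc).exists_bound_of_continuousOn
    (hF'.continuousOn (s := Metric.closedBall ε₀ 1 ×ˢ Set.uIcc a b))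
  refine (hasDerivAt_integral_of_dominated_loc_of_deriv_le (bound := fun _ => C)
    (Metric.ball_mem_nhds ε₀ one_pos) (.of_forall fun ε => (hF ε).aestronglyMeasurable)
    ((hF ε₀).intervalIntegrable _ _)
    (hF'.comp (Continuous.prodMk_right ε₀)).aestronglyMeasurable ?_ intervalIntegrable_const
    (.of_forall fun t _ ε _ => hderiv ε t)).2
  refine .of_forall fun t ht ε hε => hC (ε, t) ⟨Metric.ball_subset_closedBall hε, ?_⟩
  exact Set.uIoc_subset_uIcc ht

theorem integral_inner_deriv_eq_deriv_inner {E : Type*} [NormedAddCommGroup E]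
    [InnerProductSpace ℝ E] {u v : ℝ → E} {a b : ℝ} (hu : ContDiff ℝ 1 u) (hv : ContDiff ℝ 1 v) :
    ∫ t in a..b, ⟪u t, deriv v t⟫ = ⟪u b, v b⟫ - ⟪u a, v a⟫ - ∫ t in a..b, ⟪deriv u t, v t⟫ := by
  have h₁ : Continuous fun t => ⟪u t, deriv v t⟫ := hu.continuous.inner (hv.continuous_deriv le_rfl)
  have h₂ : Continuous fun t => ⟪deriv u t, v t⟫ := (hu.continuous_deriv le_rfl).inner hv.continuous
  have hFTC := integral_eq_sub_of_hasDerivAt (f := fun t => ⟪u t, v t⟫) (a := a) (b := b)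
    (fun t _ => (hu.differentiable one_ne_zero t).hasDerivAt.inner ℝ
      (hv.differentiable one_ne_zero t).hasDerivAt)
    ((h₁.add h₂).intervalIntegrable _ _)
  rw [integral_add (h₁.intervalIntegrable _ _) (h₂.intervalIntegrable _ _)] at hFTC
  linear_combination hFTC

theorem HasFDerivAt.hasDerivAt_half_norm_sq_add_smul_sub_comp {E F : Type*}
    [NormedAddCommGroup E] [NormedSpace ℝ E] [NormedAddCommGroup F] [InnerProductSpace ℝ F]
    {f : E → F} {f' : E →L[ℝ] F} {x v : E} {a b : F} {ε : ℝ} (hf : HasFDerivAt f f' (x + ε • v)) :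
    HasDerivAt (fun e : ℝ => 1 / 2 * ‖a + e • b - f (x + e • v)‖ ^ 2)
      ⟪a + ε • b - f (x + ε • v), b - f' v⟫ ε := by
  have hy : HasDerivAt (fun e : ℝ => a + e • b - f (x + e • v)) (b - f' v) ε := by
    have hab : HasDerivAt (fun e : ℝ => a + e • b) b ε := by
      simpa using ((hasDerivAt_id ε).smul_const b).const_add a
    have hxv : HasDerivAt (fun e : ℝ => x + e • v) v ε := by
      simpa using ((hasDerivAt_id ε).smul_const v).const_add x
    exact hab.sub (hf.comp_hasDerivAt ε hxv)
  exact (hy.norm_sq.const_mul (1 / 2)).congr_deriv (by ring)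

theorem hasDerivAt_integral_half_norm_sq_add_smul_sub_comp {E F : Type*}
    [NormedAddCommGroup E] [NormedSpace ℝ E] [NormedAddCommGroup F] [InnerProductSpace ℝ F]
    {w : ℝ → E → F} {Dw : ℝ → E → E →L[ℝ] F} (hw : Continuous (uncurry w))
    (hDw : ∀ t x, HasFDerivAt (w t) (Dw t x) x) (hDwc : Continuous (uncurry Dw))
    {x v : ℝ → E} {a b : ℝ → F} (hx : Continuous x) (hv : Continuous v) (ha : Continuous a)
    (hb : Continuous b) (s₀ s₁ ε₀ : ℝ) :
    HasDerivAt (fun ε => ∫ t in s₀..s₁, 1 / 2 * ‖a t + ε • b t - w t (x t + ε • v t)‖ ^ 2)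
      (∫ t in s₀..s₁,
        ⟪a t + ε₀ • b t - w t (x t + ε₀ • v t), b t - Dw t (x t + ε₀ • v t) (v t)⟫) ε₀ :=
  hasDerivAt_intervalIntegral_of_continuous_deriv ε₀ (fun ε => by fun_prop) (by fun_prop)
    fun ε t => (hDw t _).hasDerivAt_half_norm_sq_add_smul_sub_comp

theorem first_variation_control_action_general (d : ℕ)
    (w : ℝ → EuclideanSpace ℝ (Fin d) → EuclideanSpace ℝ (Fin d))
    (Dw : ℝ → EuclideanSpace ℝ (Fin d) →
      (EuclideanSpace ℝ (Fin d) →L[ℝ] EuclideanSpace ℝ (Fin d)))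
    (hw : ContDiff ℝ 1 (Function.uncurry w))
    (hDw : ∀ t x, HasFDerivAt (w t) (Dw t x) x)
    (X q : ℝ → EuclideanSpace ℝ (Fin d))
    (hX : ContDiff ℝ 1 X)
    (hq_def : ∀ t, q t = deriv X t - w t (X t))
    (hq : ContDiff ℝ 1 q) :
    ∀ η : ℝ → EuclideanSpace ℝ (Fin d), ContDiff ℝ 1 η → η 0 = 0 → η 1 = 0 →
      (HasDerivAt (fun ε : ℝ =>
          ∫ t in (0 : ℝ)..1, (1 / 2) * ‖deriv X t + ε • deriv η t - w t (X t + ε • η t)‖ ^ 2)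
        (-∫ t in (0 : ℝ)..1,
          ⟪deriv q t + (ContinuousLinearMap.adjoint (Dw t (X t))) (q t), η t⟫) 0) ∧
      ((∀ t, deriv q t = -(ContinuousLinearMap.adjoint (Dw t (X t))) (q t)) →
        HasDerivAt (fun ε : ℝ =>
          ∫ t in (0 : ℝ)..1, (1 / 2) * ‖deriv X t + ε • deriv η t - w t (X t + ε • η t)‖ ^ 2)
          0 0) := by
  intro η hη hη0 hη1
  have hDwc := hw.continuous_uncurry_of_hasFDerivAt_right hDw
  have hvar := hasDerivAt_integral_half_norm_sq_add_smul_sub_comp hw.continuous hDw hDwc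
    hX.continuous hη.continuous (hX.continuous_deriv le_rfl) (hη.continuous_deriv le_rfl) 0 1 0
  have hqη : Continuous fun t => ⟪q t, deriv η t⟫ := by
    have := hη.continuous_deriv le_rfl; fun_prop
  have hq'η : Continuous fun t => ⟪deriv q t, η t⟫ := by
    have := hq.continuous_deriv le_rfl; fun_prop
  have hqDη : Continuous fun t => ⟪q t, Dw t (X t) (η t)⟫ := by fun_prop
  have hfirst : HasDerivAt (fun ε : ℝ =>
      ∫ t in (0 : ℝ)..1, (1 / 2) * ‖deriv X t + ε • deriv η t - w t (X t + ε • η t)‖ ^ 2)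
      (-∫ t in (0 : ℝ)..1, ⟪deriv q t + (Dw t (X t)).adjoint (q t), η t⟫) 0 := by
    convert hvar using 1
    simp only [zero_smul, add_zero, ← hq_def, inner_sub_right, inner_add_left,
      ContinuousLinearMap.adjoint_inner_left]
    rw [integral_add (hq'η.intervalIntegrable 0 1) (hqDη.intervalIntegrable 0 1),
      integral_sub (hqη.intervalIntegrable 0 1) (hqDη.intervalIntegrable 0 1),
      integral_inner_deriv_eq_deriv_inner hq hη, hη0, hη1, inner_zero_right, inner_zero_right]
    ring
  refine ⟨hfirst, fun hadj => ?_⟩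
  simpa [hadj] using hfirst

/-- **First variation of the control action.** Let `w` be C¹ with bounded derivative (spatial
Fréchet derivative `Dw`), `X : [0,1] → ℝ^d` be C¹, and `q(t) := Ẋ(t) − w(t, X(t))` be C¹.
Then for every C¹ variation `η` with `η(0) = η(1) = 0`, the map
`ε ↦ ∫₀¹ (1/2)‖Ẋ + ε η̇ − w(t, X + ε η)‖² dt` is differentiable at `ε = 0` with derivative
`−∫₀¹ ⟨q̇ + (Dₓw(t, X))ᵀ q, η⟩ dt`; in particular, if `q̇ = −(Dₓw(t, X))ᵀ q` then the first
variation vanishes for every such `η`. -/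
theorem first_variation_control_action (d : ℕ)
    (w : ℝ → EuclideanSpace ℝ (Fin d) → EuclideanSpace ℝ (Fin d))
    (Dw : ℝ → EuclideanSpace ℝ (Fin d) →
      (EuclideanSpace ℝ (Fin d) →L[ℝ] EuclideanSpace ℝ (Fin d)))
    (hw : ContDiff ℝ 1 (Function.uncurry w))
    (hDw : ∀ t x, HasFDerivAt (w t) (Dw t x) x)
    (hbdd : ∃ M : ℝ, ∀ p : ℝ × EuclideanSpace ℝ (Fin d),
      ‖fderiv ℝ (Function.uncurry w) p‖ ≤ M)
    (X q : ℝ → EuclideanSpace ℝ (Fin d))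
    (hX : ContDiff ℝ 1 X)
    (hq_def : ∀ t, q t = deriv X t - w t (X t))
    (hq : ContDiff ℝ 1 q) :
    ∀ η : ℝ → EuclideanSpace ℝ (Fin d), ContDiff ℝ 1 η → η 0 = 0 → η 1 = 0 →
      (HasDerivAt (fun ε : ℝ =>
          ∫ t in (0 : ℝ)..1, (1 / 2) * ‖deriv X t + ε • deriv η t - w t (X t + ε • η t)‖ ^ 2)
        (-∫ t in (0 : ℝ)..1,
          ⟪deriv q t + (ContinuousLinearMap.adjoint (Dw t (X t))) (q t), η t⟫) 0) ∧
      ((∀ t, deriv q t = -(ContinuousLinearMap.adjoint (Dw t (X t))) (q t)) →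
        HasDerivAt (fun ε : ℝ =>
          ∫ t in (0 : ℝ)..1, (1 / 2) * ‖deriv X t + ε • deriv η t - w t (X t + ε • η t)‖ ^ 2)
          0 0) :=
  first_variation_control_action_general d w Dw hw hDw X q hX hq_def hq
end

section
/- Energy lower bound for steering in a linear background flow: let A be a real d×d matrix, C := ∫₀¹ exp(−sA) exp(−sAᵀ) ds, ξ, y ∈ ℝ^d, and set m := exp(−A) y − ξ. For every continuous control q : [0,1] → ℝ^d and every differentiable X : [0,1] → ℝ^d satisfying Ẋ(t) = q(t) + A X(t), X(0) = ξ, and X(1) = y, the control energy satisfies (1/2) ∫₀¹ ‖q(t)‖² dt ≥ (1/2) ⟨C⁻¹ m, m⟩. -/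
open Matrix
open scoped RealInnerProductSpace

attribute [local instance] Matrix.linftyOpNormedAddCommGroup Matrix.linftyOpNormedRing
  Matrix.linftyOpNormedAlgebra

namespace EnergyLBAux

variable {d : ℕ}

noncomputable def Phi : Matrix (Fin d) (Fin d) ℝ →L[ℝ]
    EuclideanSpace ℝ (Fin d) →L[ℝ] EuclideanSpace ℝ (Fin d) :=
  LinearMap.toContinuousLinearMap
    { toFun := fun M => LinearMap.toContinuousLinearMap (Matrix.toEuclideanLin M)
      map_add' := fun M N => by ext v; simp
      map_smul' := fun c M => by ext v; simp }

@[simp] lemma Phi_apply (M : Matrix (Fin d) (Fin d) ℝ) (v : EuclideanSpace ℝ (Fin d)) :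
    Phi M v = Matrix.toEuclideanLin M v := rfl

lemma toEuc_mul (M N : Matrix (Fin d) (Fin d) ℝ) (v : EuclideanSpace ℝ (Fin d)) :
    Matrix.toEuclideanLin (M * N) v = Matrix.toEuclideanLin M (Matrix.toEuclideanLin N v) := by
  simp [Matrix.toEuclideanLin_apply, Matrix.mulVec_mulVec]

lemma toEuc_entry (M : Matrix (Fin d) (Fin d) ℝ) (x : EuclideanSpace ℝ (Fin d)) (i : Fin d) :
    Matrix.toEuclideanLin M x i = ∑ j, M i j * x j := rfl

lemma inner_toEuc (M : Matrix (Fin d) (Fin d) ℝ) (u w : EuclideanSpace ℝ (Fin d)) :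
    ⟪Matrix.toEuclideanLin M u, w⟫ = ∑ i, ∑ j, M i j * (u j * w i) := by
  simp only [PiLp.inner_apply, RCLike.inner_apply, conj_trivial, toEuc_entry, Finset.sum_mul]
  congr 1; ext i; rw [Finset.mul_sum]; congr 1; ext j; ring

lemma inner_eq_dot (u w : EuclideanSpace ℝ (Fin d)) :
    ⟪u, w⟫ = (WithLp.equiv 2 (Fin d → ℝ) u) ⬝ᵥ (WithLp.equiv 2 (Fin d → ℝ) w) := by
  simp [PiLp.inner_apply, RCLike.inner_apply, conj_trivial, dotProduct]
  exact Finset.sum_congr rfl fun _ _ => mul_comm _ _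

lemma quad_dot (M : Matrix (Fin d) (Fin d) ℝ) (w : EuclideanSpace ℝ (Fin d)) :
    ⟪Matrix.toEuclideanLin (M * Mᵀ) w, w⟫ = ‖Matrix.toEuclideanLin Mᵀ w‖ ^ 2 := by
  rw [← real_inner_self_eq_norm_sq]
  rw [inner_eq_dot, inner_eq_dot]
  simp only [WithLp.equiv_apply, Matrix.ofLp_toEuclideanLin_apply]
  rw [← Matrix.mulVec_mulVec, dotProduct_comm, Matrix.dotProduct_mulVec,
    ← Matrix.mulVec_transpose]

lemma adjoint_inner (M : Matrix (Fin d) (Fin d) ℝ) (u x : EuclideanSpace ℝ (Fin d)) :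
    ⟪u, Matrix.toEuclideanLin M x⟫ = ⟪Matrix.toEuclideanLin Mᵀ u, x⟫ := by
  rw [inner_eq_dot, inner_eq_dot]
  simp only [WithLp.equiv_apply, Matrix.ofLp_toEuclideanLin_apply]
  rw [Matrix.dotProduct_mulVec, ← Matrix.mulVec_transpose]

lemma exp_cont (B : Matrix (Fin d) (Fin d) ℝ) :
    Continuous fun s : ℝ => NormedSpace.exp (-s • B) :=
  NormedSpace.exp_continuous.comp ((continuous_neg.comp continuous_id).smul continuous_const)

/-- The quadratic form of `C` is the integral of the squared norm. -/
lemma quadform (A : Matrix (Fin d) (Fin d) ℝ) (C : Matrix (Fin d) (Fin d) ℝ)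
    (hC : ∀ i j, C i j = ∫ s in (0 : ℝ)..1,
      (NormedSpace.exp (-s • A) * NormedSpace.exp (-s • Aᵀ)) i j)
    (w : EuclideanSpace ℝ (Fin d)) :
    ⟪Matrix.toEuclideanLin C w, w⟫
      = ∫ s in (0:ℝ)..1, ‖Matrix.toEuclideanLin (NormedSpace.exp (-s • Aᵀ)) w‖ ^ 2 := by
  have hT : ∀ s : ℝ, NormedSpace.exp (-s • Aᵀ) = (NormedSpace.exp (-s • A))ᵀ := by
    intro s
    rw [← Matrix.transpose_smul, Matrix.exp_transpose]
  have hGcont : Continuous fun s : ℝ =>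
      NormedSpace.exp (-s • A) * NormedSpace.exp (-s • Aᵀ) := (exp_cont A).mul (exp_cont Aᵀ)
  have hentry : ∀ i j, Continuous fun s : ℝ =>
      (NormedSpace.exp (-s • A) * NormedSpace.exp (-s • Aᵀ)) i j := by
    intro i j
    exact ((continuous_apply j).comp ((continuous_apply i).comp hGcont))
  rw [inner_toEuc]
  have step1 : ∀ i j, C i j * (w j * w i)
      = ∫ s in (0:ℝ)..1,
          (NormedSpace.exp (-s • A) * NormedSpace.exp (-s • Aᵀ)) i j * (w j * w i) := by
    intro i j
    rw [hC i j, intervalIntegral.integral_mul_const]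
  have swap : (∫ s in (0:ℝ)..1, ∑ i, ∑ j,
        (NormedSpace.exp (-s • A) * NormedSpace.exp (-s • Aᵀ)) i j * (w j * w i))
      = ∑ i, ∑ j, ∫ s in (0:ℝ)..1,
        (NormedSpace.exp (-s • A) * NormedSpace.exp (-s • Aᵀ)) i j * (w j * w i) := by
    rw [intervalIntegral.integral_finset_sum]
    · refine Finset.sum_congr rfl fun i _ => ?_
      rw [intervalIntegral.integral_finset_sum]
      intro j _
      exact ((hentry i j).mul continuous_const).intervalIntegrable _ _
    · intro i _
      exact (continuous_finset_sum _ fun j _ =>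
        (hentry i j).mul continuous_const).intervalIntegrable _ _
  calc ∑ i, ∑ j, C i j * (w j * w i)
      = ∑ i, ∑ j, ∫ s in (0:ℝ)..1,
          (NormedSpace.exp (-s • A) * NormedSpace.exp (-s • Aᵀ)) i j * (w j * w i) := by
        simp_rw [step1]
    _ = ∫ s in (0:ℝ)..1, ∑ i, ∑ j,
          (NormedSpace.exp (-s • A) * NormedSpace.exp (-s • Aᵀ)) i j * (w j * w i) :=
        swap.symm
    _ = ∫ s in (0:ℝ)..1, ‖Matrix.toEuclideanLin (NormedSpace.exp (-s • Aᵀ)) w‖ ^ 2 := by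
        congr 1
        ext s
        rw [← inner_toEuc, hT, quad_dot]

/-- `C` is invertible. -/
lemma isUnit_C (A : Matrix (Fin d) (Fin d) ℝ) (C : Matrix (Fin d) (Fin d) ℝ)
    (hC : ∀ i j, C i j = ∫ s in (0 : ℝ)..1,
      (NormedSpace.exp (-s • A) * NormedSpace.exp (-s • Aᵀ)) i j) :
    IsUnit C := by
  rw [← Matrix.mulVec_injective_iff_isUnit]
  have hker : ∀ v : Fin d → ℝ, C *ᵥ v = 0 → v = 0 := by
    intro v hv
    by_contra hv0
    set w : EuclideanSpace ℝ (Fin d) := (WithLp.equiv 2 (Fin d → ℝ)).symm v with hw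
    have hCw : Matrix.toEuclideanLin C w = 0 := by
      simp [hw, Matrix.toEuclideanLin_apply, hv]
    have h0 : ⟪Matrix.toEuclideanLin C w, w⟫ = 0 := by rw [hCw]; simp
    have hpos : 0 < ∫ s in (0:ℝ)..1,
        ‖Matrix.toEuclideanLin (NormedSpace.exp (-s • Aᵀ)) w‖ ^ 2 := by
      apply intervalIntegral.intervalIntegral_pos_of_pos_on
      · exact (((Phi.continuous.comp (exp_cont Aᵀ)).clm_apply
          continuous_const).norm.pow 2).intervalIntegrable _ _
      · intro s _
        have hne : Matrix.toEuclideanLin (NormedSpace.exp (-s • Aᵀ)) w ≠ 0 := by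
          intro h
          have hu : IsUnit (NormedSpace.exp (-s • Aᵀ)) := Matrix.isUnit_exp _
          have hinj := Matrix.mulVec_injective_iff_isUnit.mpr hu
          have : NormedSpace.exp (-s • Aᵀ) *ᵥ v = 0 := by
            have := congrArg (WithLp.equiv 2 (Fin d → ℝ)) h
            simpa [Matrix.toEuclideanLin_apply, hw] using this
          have : v = 0 := hinj (by simpa [Matrix.mulVec_zero] using this)
          exact hv0 this
        exact pow_pos (norm_pos_iff.mpr hne) 2
      · norm_num
    rw [quadform A C hC w] at h0
    rw [h0] at hpos
    exact lt_irrefl 0 hpos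
  intro v1 v2 h
  have := hker (v1 - v2) (by rw [Matrix.mulVec_sub, h, sub_self])
  exact sub_eq_zero.mp this

end EnergyLBAux

open EnergyLBAux MeasureTheory

/-- **Energy lower bound for steering in a linear background flow.** Let `A` be a real `d×d`
matrix, `C := ∫₀¹ exp(−sA) exp(−sAᵀ) ds` (entrywise), `ξ, y ∈ ℝ^d`, and `m := exp(−A) y − ξ`.
For every continuous control `q : [0,1] → ℝ^d` and every differentiable `X : [0,1] → ℝ^d` with
`Ẋ = q + AX`, `X(0) = ξ`, `X(1) = y`, the control energy satisfies
`(1/2) ∫₀¹ ‖q(t)‖² dt ≥ (1/2) ⟨C⁻¹ m, m⟩`. -/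
theorem energy_lower_bound_linear_flow (d : ℕ)
    (A : Matrix (Fin d) (Fin d) ℝ)
    (C : Matrix (Fin d) (Fin d) ℝ)
    (hC : ∀ i j, C i j = ∫ s in (0 : ℝ)..1,
      (NormedSpace.exp (-s • A) * NormedSpace.exp (-s • Aᵀ)) i j)
    (ξ y m : EuclideanSpace ℝ (Fin d))
    (hm : m = Matrix.toEuclideanLin (NormedSpace.exp (-A)) y - ξ)
    (q : ℝ → EuclideanSpace ℝ (Fin d)) (hq : ContinuousOn q (Set.Icc (0 : ℝ) 1))
    (X : ℝ → EuclideanSpace ℝ (Fin d))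
    (hX : ∀ t ∈ Set.Icc (0 : ℝ) 1,
      HasDerivAt X (q t + Matrix.toEuclideanLin A (X t)) t)
    (hX0 : X 0 = ξ) (hX1 : X 1 = y) :
    (1 / 2) * ∫ t in (0 : ℝ)..1, ‖q t‖ ^ 2
      ≥ (1 / 2) * ⟪Matrix.toEuclideanLin C⁻¹ m, m⟫ := by
  classical
  -- Part 1 : `m` is the integral of `exp(-tA) q(t)`
  set E : ℝ → Matrix (Fin d) (Fin d) ℝ := fun s => NormedSpace.exp (-s • A) with hEdef
  have hEcont : Continuous E := exp_cont A
  have hEderiv : ∀ t : ℝ, HasDerivAt E (E t * (-A)) t := by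
    intro t
    have h := hasDerivAt_exp_smul_const (𝕂 := ℝ) (-A) t
    simp only [hEdef, smul_neg, neg_smul] at h ⊢
    exact h
  set Z : ℝ → EuclideanSpace ℝ (Fin d) := fun t => Phi (E t) (X t) with hZdef
  have hZderiv : ∀ t ∈ Set.uIcc (0:ℝ) 1, HasDerivAt Z (Phi (E t) (q t)) t := by
    intro t ht
    rw [Set.uIcc_of_le zero_le_one] at ht
    have h1 : HasDerivAt (fun s => Phi (E s)) (Phi (E t * -A)) t :=
      Phi.hasFDerivAt.comp_hasDerivAt t (hEderiv t)
    have h2 := h1.clm_apply (hX t ht)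
    refine h2.congr_deriv ?_
    simp only [Phi_apply, mul_neg, map_neg, ContinuousLinearMap.neg_apply,
      ContinuousLinearMap.smul_apply, neg_one_smul, map_add, toEuc_mul]
    abel
  have hint : IntervalIntegrable (fun t => Phi (E t) (q t)) volume 0 1 := by
    apply ContinuousOn.intervalIntegrable
    rw [Set.uIcc_of_le zero_le_one]
    exact ((Phi.continuous.comp hEcont).continuousOn).clm_apply hq
  have hftc := intervalIntegral.integral_eq_sub_of_hasDerivAt hZderiv hint
  have hZ1 : Z 1 = Matrix.toEuclideanLin (NormedSpace.exp (-A)) y := by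
    simp [hZdef, hEdef, hX1, neg_smul, one_smul]
  have hZ0 : Z 0 = ξ := by
    simp [hZdef, hEdef, hX0, NormedSpace.exp_zero, Matrix.toEuclideanLin_apply,
      Matrix.one_mulVec]
  have hmInt : (∫ t in (0:ℝ)..1, Phi (E t) (q t)) = m := by
    rw [hftc, hZ1, hZ0, ← hm]
  -- Part 2 : inverse of C
  have hU : IsUnit C := isUnit_C A C hC
  have hCC : C * C⁻¹ = 1 := Matrix.mul_nonsing_inv C ((Matrix.isUnit_iff_isUnit_det C).mp hU)
  set v : EuclideanSpace ℝ (Fin d) := Matrix.toEuclideanLin C⁻¹ m with hvdef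
  set F : ℝ → EuclideanSpace ℝ (Fin d) :=
    fun s => Matrix.toEuclideanLin (NormedSpace.exp (-s • Aᵀ)) v with hFdef
  have hFcont : Continuous F := (Phi.continuous.comp (exp_cont Aᵀ)).clm_apply continuous_const
  have hT : ∀ s : ℝ, NormedSpace.exp (-s • Aᵀ) = (E s)ᵀ := by
    intro s; rw [hEdef, ← Matrix.transpose_smul, Matrix.exp_transpose]
  -- pairing identity
  have hpair : ⟪v, m⟫ = ∫ s in (0:ℝ)..1, ⟪F s, q s⟫ := by
    have h1 := (innerSL ℝ v).intervalIntegral_comp_comm hint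
    rw [hmInt] at h1
    have h1' : ⟪v, m⟫ = ∫ x in (0:ℝ)..1, ⟪v, Phi (E x) (q x)⟫ := h1.symm
    rw [h1']
    refine intervalIntegral.integral_congr fun s _ => ?_
    show ⟪v, Matrix.toEuclideanLin (E s) (q s)⟫ = ⟪F s, q s⟫
    rw [adjoint_inner, hFdef]
    rw [show (E s)ᵀ = NormedSpace.exp (-s • Aᵀ) from (hT s).symm]
  -- integrability facts
  have hq2 : IntervalIntegrable (fun s => ‖q s‖^2) volume 0 1 := by
    apply ContinuousOn.intervalIntegrable
    rw [Set.uIcc_of_le zero_le_one]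
    exact hq.norm.pow 2
  have hFq : IntervalIntegrable (fun s => ⟪F s, q s⟫) volume 0 1 := by
    apply ContinuousOn.intervalIntegrable
    rw [Set.uIcc_of_le zero_le_one]
    exact hFcont.continuousOn.inner hq
  have hF2 : IntervalIntegrable (fun s => ‖F s‖^2) volume 0 1 :=
    ((hFcont.norm.pow 2)).intervalIntegrable _ _
  have hquad := quadform A C hC v
  have hCv : Matrix.toEuclideanLin C v = m := by
    rw [hvdef, ← toEuc_mul, hCC]
    simp [Matrix.toEuclideanLin_apply, Matrix.one_mulVec]
  have hvm : ⟪Matrix.toEuclideanLin C v, v⟫ = ⟪v, m⟫ := by rw [hCv, real_inner_comm]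
  have hexp : (∫ s in (0:ℝ)..1, ‖q s - F s‖^2)
      = (∫ s in (0:ℝ)..1, ‖q s‖^2) - 2 * (∫ s in (0:ℝ)..1, ⟪F s, q s⟫)
        + (∫ s in (0:ℝ)..1, ‖F s‖^2) := by
    have hpt : ∀ s, ‖q s - F s‖^2 = ‖q s‖^2 - 2 * ⟪F s, q s⟫ + ‖F s‖^2 := by
      intro s
      rw [norm_sub_sq_real, real_inner_comm]
    simp_rw [hpt]
    rw [intervalIntegral.integral_add (hq2.sub (hFq.const_mul 2)) hF2,
      intervalIntegral.integral_sub hq2 (hFq.const_mul 2),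
      intervalIntegral.integral_const_mul]
  have hnonneg : 0 ≤ ∫ s in (0:ℝ)..1, ‖q s - F s‖^2 :=
    intervalIntegral.integral_nonneg zero_le_one (fun u _ => sq_nonneg _)
  rw [hexp, ← hpair, ← hquad, hvm] at hnonneg
  linarith
end

section
/- Uniqueness of the energy-minimizing control in a linear background flow: let A be a real d×d matrix, C := ∫₀¹ exp(−sA) exp(−sAᵀ) ds, ξ, y ∈ ℝ^d, and m := exp(−A) y − ξ. If a continuous control q : [0,1] → ℝ^d steers ξ to y (i.e. the solution of Ẋ = q + AX with X(0)=ξ satisfies X(1)=y) and achieves equality (1/2)∫₀¹‖q(t)‖² dt = (1/2)⟨C⁻¹ m, m⟩, then q(t) = exp(−tAᵀ) C⁻¹ m for every t ∈ [0,1]. Hence the minimization problem admits a unique global minimizer among continuous controls. -/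
/-! Variation of constants gives `∫₀¹ exp(−sA) q(s) ds = m`. With `v := C⁻¹ m` and
`p(s) := exp(−sAᵀ) v` this yields `∫₀¹ ⟪q, p⟫ = ⟪v, m⟫`, while the definition of `C` gives
`∫₀¹ ‖p‖² = ⟪v, C v⟫ = ⟪v, m⟫`. With the energy equality, `∫₀¹ ‖q − p‖² = 0`, and continuity
forces `q = p` on `[0, 1]`. -/

open Matrix
open scoped RealInnerProductSpace

open NormedSpace Set MeasureTheory

section VariationOfConstants

variable {E : Type*} [NormedAddCommGroup E] [NormedSpace ℝ E] [CompleteSpace E]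

theorem integral_exp_neg_smul_apply_of_hasDerivAt (B : E →L[ℝ] E) {X q : ℝ → E} {a b : ℝ}
    (hab : a ≤ b) (hq : ContinuousOn q (Icc a b))
    (hX : ∀ t ∈ Icc a b, HasDerivAt X (q t + B (X t)) t) :
    ∫ s in a..b, exp (-s • B) (q s) = exp (-b • B) (X b) - exp (-a • B) (X a) := by
  have hexp (t : ℝ) : HasDerivAt (fun s : ℝ => exp (-s • B)) (exp (-t • B) * -B) t := by
    simpa only [neg_smul, smul_neg] using hasDerivAt_exp_smul_const (-B) t
  have hcont : Continuous fun s : ℝ => exp (-s • B) :=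
    (differentiable_exp_smul_const ℝ B).continuous.comp continuous_neg
  refine intervalIntegral.integral_eq_sub_of_hasDerivAt (f := fun t => exp (-t • B) (X t))
    (fun t ht => ?_)
    ((hcont.continuousOn.clm_apply hq).intervalIntegrable_of_Icc hab)
  rw [uIcc_of_le hab] at ht
  convert (hexp t).clm_apply (hX t ht) using 1
  rw [mul_apply_eq_comp, _root_.neg_apply, map_neg, map_add]
  abel

end VariationOfConstants

section L2

variable {E : Type*} [NormedAddCommGroup E] [InnerProductSpace ℝ E]

theorem eqOn_Icc_of_integral_inner_eq_integral_norm_sq {f g : ℝ → E} {a b c : ℝ} (hab : a < b)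
    (hf : ContinuousOn f (Icc a b)) (hg : ContinuousOn g (Icc a b))
    (hff : ∫ s in a..b, ‖f s‖ ^ 2 = c) (hfg : ∫ s in a..b, ⟪f s, g s⟫ = c)
    (hgg : ∫ s in a..b, ‖g s‖ ^ 2 = c) :
    EqOn f g (Icc a b) := by
  have hint {h : ℝ → ℝ} (hh : ContinuousOn h (Icc a b)) : IntervalIntegrable h volume a b :=
    hh.intervalIntegrable_of_Icc hab.le
  have hdist : ∫ s in a..b, ‖f s - g s‖ ^ 2 = 0 := by
    have hf2 : IntervalIntegrable (fun s => ‖f s‖ ^ 2) volume a b := hint (hf.norm.pow 2)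
    have hg2 : IntervalIntegrable (fun s => ‖g s‖ ^ 2) volume a b := hint (hg.norm.pow 2)
    have hfg2 := (hint (hf.inner hg)).const_mul 2
    simp_rw [norm_sub_sq_real]
    rw [intervalIntegral.integral_add (hf2.sub hfg2) hg2, intervalIntegral.integral_sub hf2 hfg2,
      intervalIntegral.integral_const_mul, hff, hfg, hgg]
    ring
  intro t ht
  by_contra hne
  have hpos := intervalIntegral.integral_lt_integral_of_continuousOn_of_le_of_exists_lt hab
    continuousOn_const ((hf.sub hg).norm.pow 2) (fun s _ => sq_nonneg ‖f s - g s‖)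
    ⟨t, ht, pow_pos (norm_pos_iff.2 (sub_ne_zero.2 hne)) 2⟩
  simp [hdist] at hpos

end L2

namespace Matrix

variable {n : Type*} [Fintype n]

theorem dotProduct_mulVec_eq_intervalIntegral {m : Type*} [Fintype m] {μ : Measure ℝ}
    {F : ℝ → Matrix m n ℝ} {C : Matrix m n ℝ} {a b : ℝ}
    (hF : ∀ i j, IntervalIntegrable (fun s => F s i j) μ a b)
    (hC : ∀ i j, C i j = ∫ s in a..b, F s i j ∂μ) (x : m → ℝ) (y : n → ℝ) :
    x ⬝ᵥ C *ᵥ y = ∫ s in a..b, x ⬝ᵥ F s *ᵥ y ∂μ := by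
  have hterm (i : m) (j : n) : IntervalIntegrable (fun s => x i * (F s i j * y j)) μ a b :=
    ((hF i j).mul_const _).const_mul _
  calc x ⬝ᵥ C *ᵥ y = ∑ i, ∑ j, ∫ s in a..b, x i * (F s i j * y j) ∂μ := by
        simp only [dotProduct, mulVec, hC, Finset.mul_sum, intervalIntegral.integral_const_mul,
          intervalIntegral.integral_mul_const]
    _ = ∑ i, ∫ s in a..b, ∑ j, x i * (F s i j * y j) ∂μ :=
        Finset.sum_congr rfl fun i _ =>
          (intervalIntegral.integral_finsetSum fun j _ => hterm i j).symm
    _ = ∫ s in a..b, x ⬝ᵥ F s *ᵥ y ∂μ := by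
        rw [← intervalIntegral.integral_finsetSum fun i _ => by
          simpa only [Finset.sum_fn] using IntervalIntegrable.sum _ fun j _ => hterm i j]
        simp only [dotProduct, mulVec, Finset.mul_sum]

variable [DecidableEq n]

theorem toEuclideanCLM_exp {𝕜 : Type*} [RCLike 𝕜] (M : Matrix n n 𝕜) :
    toEuclideanCLM (𝕜 := 𝕜) (exp M) = exp (toEuclideanCLM (𝕜 := 𝕜) M) := by
  open scoped Matrix.Norms.L2Operator in
  exact map_exp_of_mem_ball (𝕂 := 𝕜) _
    (AddMonoidHomClass.isometry_of_norm (toEuclideanCLM (𝕜 := 𝕜) (n := n))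
      fun _ => rfl).continuous M (by simp [expSeries_radius_eq_top])

theorem continuous_exp_smul (M : Matrix n n ℝ) : Continuous fun s : ℝ => exp (s • M) := by
  open scoped Matrix.Norms.L2Operator in
  exact (differentiable_exp_smul_const ℝ M).continuous

theorem toEuclideanCLM_transpose (M : Matrix n n ℝ) :
    toEuclideanCLM (𝕜 := ℝ) Mᵀ = ContinuousLinearMap.adjoint (toEuclideanCLM (𝕜 := ℝ) M) := by
  rw [← ContinuousLinearMap.star_eq_adjoint, ← map_star, star_eq_conjTranspose,
    conjTranspose_eq_transpose_of_trivial]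

-- For singular `C` the junk value `C⁻¹ = 0` makes both sides vanish.
theorem inner_toEuclideanLin_nonsing_inv_cancel {𝕜 : Type*} [RCLike 𝕜] (C : Matrix n n 𝕜)
    (x : EuclideanSpace 𝕜 n) :
    inner 𝕜 (toEuclideanLin C⁻¹ x) (toEuclideanLin C (toEuclideanLin C⁻¹ x)) =
      inner 𝕜 (toEuclideanLin C⁻¹ x) x := by
  by_cases hC : IsUnit C.det
  · simp [toLpLin_apply, mulVec_mulVec, mul_nonsing_inv C hC]
  · simp [nonsing_inv_apply_not_isUnit C hC]

theorem integral_norm_toEuclideanCLM_exp_transpose_sq {A C : Matrix n n ℝ} {a b : ℝ}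
    (hC : ∀ i j, C i j = ∫ s in a..b, (exp (-s • A) * exp (-s • Aᵀ)) i j)
    (v : EuclideanSpace ℝ n) :
    ∫ s in a..b, ‖toEuclideanCLM (𝕜 := ℝ) (exp (-s • Aᵀ)) v‖ ^ 2 =
      ⟪v, toEuclideanCLM (𝕜 := ℝ) C v⟫ := by
  have hexp : Continuous fun s : ℝ => exp (-s • A) := (continuous_exp_smul A).comp continuous_neg
  have hexpT : Continuous fun s : ℝ => exp (-s • Aᵀ) :=
    (continuous_exp_smul Aᵀ).comp continuous_neg
  rw [inner_toEuclideanCLM, dotProduct_mulVec_eq_intervalIntegral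
    (fun i j => ((hexp.matrix_mul hexpT).matrix_elem i j).intervalIntegrable a b) hC]
  refine intervalIntegral.integral_congr fun s _ => ?_
  rw [← inner_toEuclideanCLM, map_mul, ← transpose_smul, exp_transpose, toEuclideanCLM_transpose,
    mul_apply_eq_comp, ← ContinuousLinearMap.adjoint_inner_left, real_inner_self_eq_norm_sq]

end Matrix

/-- **Uniqueness of the energy-minimizing control in a linear background flow.** Let `A` be a
real `d×d` matrix, `C := ∫₀¹ exp(−sA) exp(−sAᵀ) ds` (entrywise), `ξ, y ∈ ℝ^d`, and
`m := exp(−A) y − ξ`. If a continuous control `q` steers `ξ` to `y` (i.e. the solution of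
`Ẋ = q + AX`, `X(0) = ξ` satisfies `X(1) = y`) and achieves
`(1/2)∫₀¹‖q(t)‖² dt = (1/2)⟨C⁻¹ m, m⟩`, then `q(t) = exp(−tAᵀ) C⁻¹ m` on `[0,1]`. -/
theorem minimizing_control_unique_linear_flow (d : ℕ)
    (A : Matrix (Fin d) (Fin d) ℝ)
    (C : Matrix (Fin d) (Fin d) ℝ)
    (hC : ∀ i j, C i j = ∫ s in (0 : ℝ)..1,
      (NormedSpace.exp (-s • A) * NormedSpace.exp (-s • Aᵀ)) i j)
    (ξ y m : EuclideanSpace ℝ (Fin d))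
    (hm : m = Matrix.toEuclideanLin (NormedSpace.exp (-A)) y - ξ)
    (q : ℝ → EuclideanSpace ℝ (Fin d)) (hq : ContinuousOn q (Set.Icc (0 : ℝ) 1))
    (X : ℝ → EuclideanSpace ℝ (Fin d))
    (hX : ∀ t ∈ Set.Icc (0 : ℝ) 1,
      HasDerivAt X (q t + Matrix.toEuclideanLin A (X t)) t)
    (hX0 : X 0 = ξ) (hX1 : X 1 = y)
    (henergy : (1 / 2) * (∫ t in (0 : ℝ)..1, ‖q t‖ ^ 2)
      = (1 / 2) * ⟪Matrix.toEuclideanLin C⁻¹ m, m⟫) :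
    ∀ t ∈ Set.Icc (0 : ℝ) 1,
      q t = Matrix.toEuclideanLin (NormedSpace.exp (-t • Aᵀ))
        (Matrix.toEuclideanLin C⁻¹ m) := by
  set B := toEuclideanCLM (𝕜 := ℝ) A
  set v := toEuclideanLin C⁻¹ m
  set p : ℝ → EuclideanSpace ℝ (Fin d) := fun s => toEuclideanLin (exp (-s • Aᵀ)) v
  have hflow (s : ℝ) (x : EuclideanSpace ℝ (Fin d)) :
      toEuclideanLin (exp (-s • A)) x = exp (-s • B) x := by
    rw [← map_smul, ← toEuclideanCLM_exp]
    rfl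
  have hp (s : ℝ) : p s = ContinuousLinearMap.adjoint (exp (-s • B)) v := by
    rw [← map_smul, ← toEuclideanCLM_exp, ← toEuclideanCLM_transpose, ← exp_transpose,
      transpose_smul]
    rfl
  have hexp : Continuous fun s : ℝ => exp (-s • B) :=
    (differentiable_exp_smul_const ℝ B).continuous.comp continuous_neg
  have hsteer : ∫ s in (0 : ℝ)..1, exp (-s • B) (q s) = m := by
    rw [integral_exp_neg_smul_apply_of_hasDerivAt B zero_le_one hq hX, hX0, hX1, hm, ← hflow 1]
    simp
  have hqq : ∫ s in (0 : ℝ)..1, ‖q s‖ ^ 2 = ⟪v, m⟫ := by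
    linarith [real_inner_comm v m]
  have hqp : ∫ s in (0 : ℝ)..1, ⟪q s, p s⟫ = ⟪v, m⟫ := by
    simp_rw [hp, ContinuousLinearMap.adjoint_inner_right, real_inner_comm v]
    rw [← hsteer]
    exact (innerSL ℝ v).intervalIntegral_comp_comm
      ((hexp.continuousOn.clm_apply hq).intervalIntegrable_of_Icc zero_le_one)
  have hpp : ∫ s in (0 : ℝ)..1, ‖p s‖ ^ 2 = ⟪v, m⟫ :=
    (integral_norm_toEuclideanCLM_exp_transpose_sq hC v).trans
      (inner_toEuclideanLin_nonsing_inv_cancel C m)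
  have hpcont : Continuous p := by
    rw [funext hp]
    exact (ContinuousLinearMap.adjoint.continuous.comp hexp).clm_apply continuous_const
  exact eqOn_Icc_of_integral_inner_eq_integral_norm_sq zero_lt_one hq hpcont.continuousOn
    hqq hqp hpp
end
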